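/- (Stochastic Gronwall, upper bound variant.) Let (X_t) be an adapted process on a filtered probability space satisfying X_{t+1} = (1+α) X_t + ξ_{t+1} + Z_{t+1}, X₀ = x₀ > 0, with α > 0 fixed, (ξ_t) adapted, and (Z_t) a martingale difference sequence. Let x₀⁺ ≥ x₀ and set x_t⁺ := (1+α)^t x₀⁺. Let T ∈ ℕ, δ ∈ (0,1). Suppose there exist δ_ξ ∈ (0,1) and Ξ, σ > 0 such that for every t, on the event {X_s ≤ 2 x_s⁺ for all s ≤ t}: P( |ξ_{t+1}| > (1+α)^t Ξ | F_t ) ≤ δ_ξ and E[Z_{t+1}² | F_t] ≤ (1+α)^t σ². If Ξ ≤ x₀⁺/(4T) and σ² ≤ δ α (x₀⁺)²/16, then with probability at least 1 − δ − T δ_ξ, X_t ≤ 2 x_t⁺ for all t ∈ [T]. -/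

import Mathlib

/-!
Dividing the recursion by `(1 + α)^(t+1)` gives
`X_t = (1 + α)^t (x₀ + ∑_{s<t} (1 + α)^{-(s+1)} (ξ_{s+1} + Z_{s+1}))`.
Call step `r` good if `X_{r+1} ≤ 2 x⁺_{r+1}` and `|ξ_{r+1}| ≤ (1 + α)^r Ξ`, and switch off the
noise increments from the first bad step on. Up to that step the hypotheses on `ξ` and `Z` are in
force, so the switched noise sum is a sum of orthogonal martingale increments with second moment at
most `σ² ∑_s (1 + α)^{-(s+2)} ≤ σ²/α ≤ δ (x₀⁺)²/16`, and by Chebyshev it reaches `x₀⁺/2` with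
probability at most `δ/4`. A first bad step caused by `ξ` has probability at most `δ_ξ` at each of
the `T` times. Outside these events the drift sum is at most `T Ξ ≤ x₀⁺/4` and the noise sum stays
below `x₀⁺/2`, so `X` cannot cause a bad step either.
-/

open MeasureTheory Finset

lemma eq_pow_mul_add_sum_of_succ_eq {a : ℝ} (ha : a ≠ 0) {x u : ℕ → ℝ}
    (hrec : ∀ t, x (t + 1) = a * x t + u (t + 1)) (t : ℕ) :
    x t = a ^ t * (x 0 + ∑ s ∈ range t, (a ^ (s + 1))⁻¹ * u (s + 1)) := by
  induction t with
  | zero => simp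
  | succ t ih =>
    rw [hrec, ih, sum_range_succ]
    field_simp
    ring

lemma lt_two_mul_pow_mul_of_sum_lt {a x₀p Ξ : ℝ} (ha : 1 ≤ a) (hx₀p : 0 ≤ x₀p)
    {x u v : ℕ → ℝ} (hx0 : x 0 ≤ x₀p) (hrec : ∀ t, x (t + 1) = a * x t + u (t + 1) + v (t + 1))
    {t : ℕ} (hu : ∀ s ≤ t, |u (s + 1)| ≤ a ^ s * Ξ) (htΞ : (t + 1) * Ξ ≤ x₀p / 4)
    (hv : ∑ s ∈ range (t + 1), (a ^ (s + 1))⁻¹ * v (s + 1) < x₀p / 2) :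
    x (t + 1) < 2 * (a ^ (t + 1) * x₀p) := by
  have ha0 : 0 < a := by linarith
  have hΞ : 0 ≤ Ξ := by simpa using (abs_nonneg _).trans (hu 0 t.zero_le)
  have hdrift : ∑ s ∈ range (t + 1), (a ^ (s + 1))⁻¹ * u (s + 1) ≤ x₀p / 4 := by
    calc ∑ s ∈ range (t + 1), (a ^ (s + 1))⁻¹ * u (s + 1) ≤ ∑ s ∈ range (t + 1), Ξ := by
          refine sum_le_sum fun s hs => ?_
          have hus := (le_abs_self _).trans (hu s (Nat.lt_succ_iff.mp (mem_range.mp hs)))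
          calc (a ^ (s + 1))⁻¹ * u (s + 1) ≤ (a ^ (s + 1))⁻¹ * (a ^ s * Ξ) := by gcongr
            _ = Ξ / a := by field_simp; ring
            _ ≤ Ξ := div_le_self hΞ ha
      _ = (t + 1) * Ξ := by simp
      _ ≤ x₀p / 4 := htΞ
  rw [eq_pow_mul_add_sum_of_succ_eq ha0.ne' (x := x) (u := fun t => u t + v t)
    (fun t => by rw [hrec, add_assoc]), mul_left_comm, sum_congr rfl fun s _ => mul_add _ _ _,
    sum_add_distrib]
  gcongr
  linarith

lemma sum_range_inv_one_add_pow_add_two_le {α : ℝ} (hα : 0 < α) (n : ℕ) :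
    ∑ s ∈ range n, ((1 + α) ^ (s + 2))⁻¹ ≤ α⁻¹ := by
  have hr0 : 0 ≤ (1 + α)⁻¹ := by positivity
  have hr1 : (1 + α)⁻¹ < 1 := inv_lt_one_of_one_lt₀ (by linarith)
  calc ∑ s ∈ range n, ((1 + α) ^ (s + 2))⁻¹ = ∑ i ∈ Ico 2 (n + 2), (1 + α)⁻¹ ^ i := by
        rw [sum_Ico_eq_sum_range]
        simp only [add_tsub_cancel_right, inv_pow, add_comm 2]
    _ ≤ (1 + α)⁻¹ ^ 2 / (1 - (1 + α)⁻¹) := geom_sum_Ico_le_of_lt_one hr0 hr1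
    _ = (α * (1 + α))⁻¹ := by field_simp [hα.ne']; ring
    _ ≤ α⁻¹ := inv_anti₀ hα (by nlinarith)

lemma natCast_mul_le_of_le_div {n : ℕ} {a b : ℝ} (hb : 0 ≤ b) (h : a ≤ b / n) : n * a ≤ b := by
  rcases n.eq_zero_or_pos with rfl | hn
  · simpa using hb
  · rwa [le_div_iff₀ (by positivity), mul_comm] at h

section

variable {Ω : Type*} {m0 : MeasurableSpace Ω} {μ : Measure Ω}

def goodUntil (G : ℕ → Set Ω) (s : ℕ) : Set Ω := {ω | ∀ r < s, ω ∈ G r}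

@[simp] lemma mem_goodUntil {G : ℕ → Set Ω} {s : ℕ} {ω : Ω} :
    ω ∈ goodUntil G s ↔ ∀ r < s, ω ∈ G r := Iff.rfl

lemma measurableSet_goodUntil {F : Filtration ℕ m0} {G : ℕ → Set Ω}
    (hG : ∀ r, MeasurableSet[F (r + 1)] (G r)) (s : ℕ) : MeasurableSet[F s] (goodUntil G s) := by
  simp only [goodUntil, Set.ofPred_forall]
  exact MeasurableSet.iInter fun r => MeasurableSet.iInter fun hr => F.mono hr _ (hG r)

lemma sum_range_indicator_goodUntil_of_notMem {G : ℕ → Set Ω} {f : ℕ → Ω → ℝ} {ω : Ω}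
    {t n : ℕ} (hω : ω ∈ goodUntil G t) (hωt : ω ∉ G t) (htn : t < n) :
    ∑ s ∈ range n, (goodUntil G s).indicator (f s) ω = ∑ s ∈ range (t + 1), f s ω := by
  rw [← sum_range_add_sum_Ico _ htn, sum_eq_zero (s := Ico _ _), add_zero]
  · refine sum_congr rfl fun s hs => Set.indicator_of_mem ?_ _
    exact fun r hr => hω r (by have := mem_range.mp hs; omega)
  · exact fun s hs =>
      Set.indicator_of_notMem (fun h => hωt (mem_goodUntil.mp h t (mem_Ico.mp hs).1)) _

lemma integral_mul_eq_zero_of_condExp_eq_zero {m : MeasurableSpace Ω} (hm : m ≤ m0)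
    [SigmaFinite (μ.trim hm)] {f g : Ω → ℝ} (hf : StronglyMeasurable[m] f)
    (hfg : Integrable (f * g) μ) (hg : Integrable g μ) (hg0 : μ[g|m] =ᵐ[μ] 0) :
    ∫ ω, f ω * g ω ∂μ = 0 := by
  calc ∫ ω, f ω * g ω ∂μ = ∫ ω, μ[f * g|m] ω ∂μ := (integral_condExp hm).symm
    _ = ∫ ω, (f * μ[g|m]) ω ∂μ :=
        integral_congr_ae (condExp_mul_of_stronglyMeasurable_left hf hfg hg)
    _ = 0 := by
      rw [integral_congr_ae (g := 0) (by filter_upwards [hg0] with ω hω; simp [hω])]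
      simp

lemma integral_sq_sum_range_eq_sum_integral_sq [IsFiniteMeasure μ] {F : Filtration ℕ m0}
    {Y : ℕ → Ω → ℝ} (hY : ∀ s, StronglyMeasurable[F (s + 1)] (Y s)) (hL2 : ∀ s, MemLp (Y s) 2 μ)
    (hY0 : ∀ s, μ[Y s|F s] =ᵐ[μ] 0) (n : ℕ) :
    ∫ ω, (∑ s ∈ range n, Y s ω) ^ 2 ∂μ = ∑ s ∈ range n, ∫ ω, Y s ω ^ 2 ∂μ := by
  induction n with
  | zero => simp
  | succ n ih =>
    set S : Ω → ℝ := fun ω => ∑ s ∈ range n, Y s ω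
    have hS : StronglyMeasurable[F n] S :=
      Finset.stronglyMeasurable_fun_sum _ fun s hs => (hY s).mono (F.mono (mem_range.mp hs))
    have hSL2 : MemLp S 2 μ := memLp_finsetSum _ fun s _ => hL2 s
    have hSY : Integrable (S * Y n) μ := hSL2.integrable_mul (hL2 n)
    have hcross : ∫ ω, S ω * Y n ω ∂μ = 0 := integral_mul_eq_zero_of_condExp_eq_zero (F.le n) hS
      hSY ((hL2 n).integrable one_le_two) (hY0 n)
    have hSY2 : Integrable (fun ω => 2 * (S ω * Y n ω)) μ := hSY.const_mul 2
    have hS2SY : Integrable (fun ω => S ω ^ 2 + 2 * (S ω * Y n ω)) μ :=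
      hSL2.integrable_sq.add hSY2
    calc ∫ ω, (∑ s ∈ range (n + 1), Y s ω) ^ 2 ∂μ
        = ∫ ω, (S ω ^ 2 + 2 * (S ω * Y n ω) + Y n ω ^ 2) ∂μ := by
          simp only [sum_range_succ, S]; congr 1; ext ω; ring
      _ = ∫ ω, S ω ^ 2 ∂μ + 2 * ∫ ω, S ω * Y n ω ∂μ + ∫ ω, Y n ω ^ 2 ∂μ := by
          rw [integral_add hS2SY (hL2 n).integrable_sq, integral_add hSL2.integrable_sq hSY2,
            integral_const_mul]
      _ = ∑ s ∈ range (n + 1), ∫ ω, Y s ω ^ 2 ∂μ := by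
          rw [hcross, ih, sum_range_succ]; ring

lemma setIntegral_le_measureReal_mul_of_condExp_le [IsFiniteMeasure μ] {m : MeasurableSpace Ω}
    (hm : m ≤ m0) {f : Ω → ℝ} (hf : Integrable f μ) {s : Set Ω} (hs : MeasurableSet[m] s) {C : ℝ}
    (hC : ∀ᵐ ω ∂μ, ω ∈ s → μ[f|m] ω ≤ C) : ∫ ω in s, f ω ∂μ ≤ μ.real s * C := by
  rw [← setIntegral_condExp hm hf hs]
  calc ∫ ω in s, μ[f|m] ω ∂μ ≤ ∫ _ in s, C ∂μ :=
        setIntegral_mono_on_ae integrable_condExp.integrableOn (integrableOn_const ..) (hm s hs) hC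
    _ = μ.real s * C := by rw [setIntegral_const, smul_eq_mul]

lemma measureReal_inter_le_of_condExp_indicator_le [IsProbabilityMeasure μ]
    {m : MeasurableSpace Ω} (hm : m ≤ m0) {s E : Set Ω} (hs : MeasurableSet[m] s)
    (hE : MeasurableSet[m0] E) {C : ℝ} (hC0 : 0 ≤ C)
    (hC : ∀ᵐ ω ∂μ, ω ∈ s → μ[E.indicator (fun _ => (1 : ℝ))|m] ω ≤ C) :
    μ.real (s ∩ E) ≤ C := by
  calc μ.real (s ∩ E) = ∫ ω in s, E.indicator (fun _ => (1 : ℝ)) ω ∂μ := by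
        rw [integral_indicator_const _ hE, smul_eq_mul, mul_one, measureReal_restrict_apply hE,
          Set.inter_comm]
    _ ≤ μ.real s * C :=
        setIntegral_le_measureReal_mul_of_condExp_le hm ((integrable_const 1).indicator hE) hs hC
    _ ≤ C := mul_le_of_le_one_left hC0 measureReal_le_one

lemma measureReal_ge_le_integral_sq_div_sq [IsFiniteMeasure μ] {f : Ω → ℝ} (hf : MemLp f 2 μ)
    {ε : ℝ} (hε : 0 < ε) : μ.real {ω | ε ≤ f ω} ≤ (∫ ω, f ω ^ 2 ∂μ) / ε ^ 2 := by
  rw [le_div_iff₀ (by positivity), mul_comm]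
  calc ε ^ 2 * μ.real {ω | ε ≤ f ω} ≤ ε ^ 2 * μ.real {ω | ε ^ 2 ≤ f ω ^ 2} := by
        refine mul_le_mul_of_nonneg_left (measureReal_mono fun ω (hω : ε ≤ f ω) => ?_) (sq_nonneg ε)
        exact pow_le_pow_left₀ hε.le hω 2
    _ ≤ ∫ ω, f ω ^ 2 ∂μ :=
        mul_meas_ge_le_integral_of_nonneg (ae_of_all _ fun ω => sq_nonneg _) hf.integrable_sq _

lemma one_sub_le_measureReal_of_compl_subset [IsProbabilityMeasure μ] {s D : Set Ω}
    {B : ℕ → Set Ω} {n : ℕ} {p q : ℝ} (hsub : sᶜ ⊆ (⋃ t ∈ range n, B t) ∪ D)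
    (hB : ∀ t, μ.real (B t) ≤ p) (hD : μ.real D ≤ q) : 1 - (n * p + q) ≤ μ.real s := by
  have hs : 1 ≤ μ.real s + μ.real sᶜ := by
    simpa [Set.union_compl_self] using measureReal_union_le (μ := μ) s sᶜ
  have hsc : μ.real sᶜ ≤ n * p + q :=
    calc μ.real sᶜ ≤ μ.real ((⋃ t ∈ range n, B t) ∪ D) := measureReal_mono hsub
      _ ≤ ∑ t ∈ range n, μ.real (B t) + μ.real D :=
          (measureReal_union_le _ _).trans (by gcongr; exact measureReal_biUnion_finset_le _ _)
      _ ≤ n * p + q := by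
          grw [sum_le_sum fun t _ => hB t, hD]
          simp
  linarith

noncomputable def stoppedIncrement (A : ℕ → Set Ω) (c : ℕ → ℝ) (Z : ℕ → Ω → ℝ) (s : ℕ) :
    Ω → ℝ :=
  (A s).indicator fun ω => c s * Z (s + 1) ω

section stoppedIncrement

variable {F : Filtration ℕ m0} {A : ℕ → Set Ω} {c : ℕ → ℝ} {Z : ℕ → Ω → ℝ}

lemma stronglyMeasurable_stoppedIncrement (hA : ∀ s, MeasurableSet[F s] (A s))
    (hZ : Adapted F Z) (s : ℕ) : StronglyMeasurable[F (s + 1)] (stoppedIncrement A c Z s) :=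
  ((hZ (s + 1)).const_mul _).indicator (F.mono s.le_succ _ (hA s)) |>.stronglyMeasurable

lemma memLp_stoppedIncrement (hA : ∀ s, MeasurableSet[F s] (A s)) (hZ : ∀ s, MemLp (Z s) 2 μ)
    (s : ℕ) : MemLp (stoppedIncrement A c Z s) 2 μ :=
  ((hZ (s + 1)).const_mul _).indicator (F.le s _ (hA s))

lemma condExp_stoppedIncrement (hA : ∀ s, MeasurableSet[F s] (A s))
    (hZ : ∀ s, Integrable (Z s) μ) (hmds : ∀ t, μ[Z (t + 1)|F t] =ᵐ[μ] 0) (s : ℕ) :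
    μ[stoppedIncrement A c Z s|F s] =ᵐ[μ] 0 := by
  filter_upwards [condExp_indicator ((hZ (s + 1)).const_mul (c s)) (hA s),
    condExp_smul (μ := μ) (c s) (Z (s + 1)) (F s), hmds s] with ω hind hsmul hmds
  rw [stoppedIncrement, hind]
  by_cases hω : ω ∈ A s
  · rw [Set.indicator_of_mem hω]
    exact hsmul.trans (by simp [hmds])
  · exact Set.indicator_of_notMem hω _

lemma integral_sq_stoppedIncrement_le [IsProbabilityMeasure μ]
    (hA : ∀ s, MeasurableSet[F s] (A s)) (hZ : ∀ s, MemLp (Z s) 2 μ) {s : ℕ} {v : ℝ} (hv0 : 0 ≤ v)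
    (hv : ∀ᵐ ω ∂μ, ω ∈ A s → μ[fun ω => Z (s + 1) ω ^ 2|F s] ω ≤ v) :
    ∫ ω, stoppedIncrement A c Z s ω ^ 2 ∂μ ≤ c s ^ 2 * v := by
  have hsq : (fun ω => stoppedIncrement A c Z s ω ^ 2)
      = (A s).indicator fun ω => c s ^ 2 * Z (s + 1) ω ^ 2 := by
    ext ω
    by_cases hω : ω ∈ A s <;> simp [stoppedIncrement, hω, mul_pow]
  rw [hsq, integral_indicator (F.le s _ (hA s)), integral_const_mul]
  gcongr
  calc ∫ ω in A s, Z (s + 1) ω ^ 2 ∂μ ≤ μ.real (A s) * v :=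
        setIntegral_le_measureReal_mul_of_condExp_le (F.le s) (hZ (s + 1)).integrable_sq (hA s) hv
    _ ≤ v := mul_le_of_le_one_left hv0 measureReal_le_one

lemma integral_sq_sum_stoppedIncrement_le [IsProbabilityMeasure μ] {α σ : ℝ} (hα : 0 < α)
    (hA : ∀ s, MeasurableSet[F s] (A s)) (hZ : Adapted F Z) (hZL2 : ∀ s, MemLp (Z s) 2 μ)
    (hmds : ∀ t, μ[Z (t + 1)|F t] =ᵐ[μ] 0)
    (hvar : ∀ s, ∀ᵐ ω ∂μ, ω ∈ A s → μ[fun ω => Z (s + 1) ω ^ 2|F s] ω ≤ (1 + α) ^ s * σ ^ 2)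
    (n : ℕ) :
    ∫ ω, (∑ s ∈ range n, stoppedIncrement A (fun s => ((1 + α) ^ (s + 1))⁻¹) Z s ω) ^ 2 ∂μ
      ≤ σ ^ 2 / α := by
  rw [integral_sq_sum_range_eq_sum_integral_sq (stronglyMeasurable_stoppedIncrement hA hZ)
    (memLp_stoppedIncrement hA hZL2)
    (condExp_stoppedIncrement hA (fun s => (hZL2 s).integrable one_le_two) hmds)]
  calc _ ≤ ∑ s ∈ range n, (((1 + α) ^ (s + 1))⁻¹) ^ 2 * ((1 + α) ^ s * σ ^ 2) :=
        sum_le_sum fun s _ => integral_sq_stoppedIncrement_le hA hZL2 (by positivity) (hvar s)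
    _ = σ ^ 2 * ∑ s ∈ range n, ((1 + α) ^ (s + 2))⁻¹ := by
        rw [mul_sum]
        refine sum_congr rfl fun s _ => ?_
        have : (1 + α) ^ s ≠ 0 := by positivity
        field_simp
        ring
    _ ≤ σ ^ 2 / α := by
        grw [sum_range_inv_one_add_pow_add_two_le hα]
        rfl

lemma measureReal_ge_sum_stoppedIncrement_le [IsProbabilityMeasure μ] {α σ ε : ℝ} (hα : 0 < α)
    (hA : ∀ s, MeasurableSet[F s] (A s)) (hZ : Adapted F Z) (hZL2 : ∀ s, MemLp (Z s) 2 μ)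
    (hmds : ∀ t, μ[Z (t + 1)|F t] =ᵐ[μ] 0)
    (hvar : ∀ s, ∀ᵐ ω ∂μ, ω ∈ A s → μ[fun ω => Z (s + 1) ω ^ 2|F s] ω ≤ (1 + α) ^ s * σ ^ 2)
    (n : ℕ) (hε : 0 < ε) :
    μ.real {ω | ε ≤ ∑ s ∈ range n, stoppedIncrement A (fun s => ((1 + α) ^ (s + 1))⁻¹) Z s ω}
      ≤ σ ^ 2 / (α * ε ^ 2) := by
  grw [measureReal_ge_le_integral_sq_div_sq
    (memLp_finsetSum _ fun s _ => memLp_stoppedIncrement hA hZL2 s) hε,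
    integral_sq_sum_stoppedIncrement_le hα hA hZ hZL2 hmds hvar, div_div]

end stoppedIncrement

def goodStep (α x₀p Ξ : ℝ) (X ξ : ℕ → Ω → ℝ) (r : ℕ) : Set Ω :=
  {ω | X (r + 1) ω ≤ 2 * ((1 + α) ^ (r + 1) * x₀p) ∧ |ξ (r + 1) ω| ≤ (1 + α) ^ r * Ξ}

section goodStep

variable {α x₀p Ξ : ℝ} {X ξ : ℕ → Ω → ℝ}

lemma measurableSet_goodStep {F : Filtration ℕ m0} (hX : Adapted F X) (hξ : Adapted F ξ)
    (r : ℕ) : MeasurableSet[F (r + 1)] (goodStep α x₀p Ξ X ξ r) :=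
  (hX (r + 1) measurableSet_Iic).inter (measurable_abs.comp (hξ (r + 1)) measurableSet_Iic)

lemma le_of_mem_goodUntil_goodStep {s : ℕ} {ω : Ω} (hX0 : X 0 ω ≤ 2 * x₀p)
    (hω : ω ∈ goodUntil (goodStep α x₀p Ξ X ξ) s) : ∀ r ≤ s, X r ω ≤ 2 * ((1 + α) ^ r * x₀p)
  | 0, _ => by simpa using hX0
  | r + 1, hr => (hω r hr).1

lemma mem_goodUntil_goodStep_of_sum_lt (hα : 0 < α) (hx₀p : 0 ≤ x₀p) {Z : ℕ → Ω → ℝ} {ω : Ω}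
    (hX0 : X 0 ω ≤ x₀p) (hrec : ∀ t, X (t + 1) ω = (1 + α) * X t ω + ξ (t + 1) ω + Z (t + 1) ω)
    {T : ℕ} (hTΞ : T * Ξ ≤ x₀p / 4)
    (hξ : ∀ t < T, ω ∈ goodUntil (goodStep α x₀p Ξ X ξ) t → |ξ (t + 1) ω| ≤ (1 + α) ^ t * Ξ)
    (hZ : ∑ s ∈ range T, stoppedIncrement (goodUntil (goodStep α x₀p Ξ X ξ))
      (fun s => ((1 + α) ^ (s + 1))⁻¹) Z s ω < x₀p / 2) :
    ∀ t ≤ T, ω ∈ goodUntil (goodStep α x₀p Ξ X ξ) t := by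
  intro t
  induction t with
  | zero => simp
  | succ t ih =>
    intro ht
    have hωt := ih (by omega)
    have hξt : ∀ s ≤ t, |ξ (s + 1) ω| ≤ (1 + α) ^ s * Ξ := fun s hs =>
      hs.eq_or_lt.elim (fun h => h ▸ hξ t (by omega) hωt) (fun h => (hωt s h).2)
    have hXt : X (t + 1) ω ≤ 2 * ((1 + α) ^ (t + 1) * x₀p) := by
      by_contra hX
      simp only [stoppedIncrement] at hZ
      rw [sum_range_indicator_goodUntil_of_notMem hωt (fun h => hX h.1) (by omega)] at hZ
      have htΞ : ((t : ℝ) + 1) * Ξ ≤ x₀p / 4 := by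
        have hΞ : 0 ≤ Ξ := by simpa using (abs_nonneg _).trans (hξt 0 t.zero_le)
        refine le_trans (mul_le_mul_of_nonneg_right ?_ hΞ) hTΞ
        exact_mod_cast ht
      exact hX (lt_two_mul_pow_mul_of_sum_lt (x := fun t => X t ω) (u := fun t => ξ t ω)
        (v := fun t => Z t ω) (by linarith) hx₀p hX0 hrec hξt htΞ hZ).le
    intro r hr
    rcases Nat.lt_succ_iff_lt_or_eq.mp hr with hr | rfl
    · exact hωt r hr
    · exact ⟨hXt, hξt r le_rfl⟩

lemma compl_setOf_le_two_mul_subset (hα : 0 < α) (hx₀p : 0 ≤ x₀p) {Z : ℕ → Ω → ℝ}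
    (hX0 : ∀ ω, X 0 ω ≤ x₀p)
    (hrec : ∀ t ω, X (t + 1) ω = (1 + α) * X t ω + ξ (t + 1) ω + Z (t + 1) ω)
    {T : ℕ} (hTΞ : T * Ξ ≤ x₀p / 4) :
    {ω | ∀ t, 1 ≤ t → t ≤ T → X t ω ≤ 2 * ((1 + α) ^ t * x₀p)}ᶜ
      ⊆ (⋃ t ∈ range T, goodUntil (goodStep α x₀p Ξ X ξ) t ∩ {ω | (1 + α) ^ t * Ξ < |ξ (t + 1) ω|})
        ∪ {ω | x₀p / 2 ≤ ∑ s ∈ range T, stoppedIncrement (goodUntil (goodStep α x₀p Ξ X ξ))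
          (fun s => ((1 + α) ^ (s + 1))⁻¹) Z s ω} := by
  intro ω hω
  by_contra hcover
  simp only [Set.mem_union, Set.mem_iUnion, Set.mem_inter_iff, Set.mem_ofPred_eq, mem_range,
    not_or, not_exists, not_and, not_lt, not_le] at hcover
  have hωT := mem_goodUntil_goodStep_of_sum_lt hα hx₀p (hX0 ω) (hrec · ω) hTΞ hcover.1
    hcover.2 T le_rfl
  exact hω fun t _ htT => le_of_mem_goodUntil_goodStep (by linarith [hX0 ω]) hωT t htT

end goodStep

end

theorem stochastic_gronwall_upper_general {Ω : Type*} {m0 : MeasurableSpace Ω}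
    (μ : Measure Ω) [IsProbabilityMeasure μ] (F : Filtration ℕ m0)
    (α x₀ x₀p : ℝ) (hα : 0 < α) (hx₀ : 0 < x₀) (hx₀p : x₀ ≤ x₀p)
    (X ξ Z : ℕ → Ω → ℝ)
    (hXadapted : Adapted F X) (hξadapted : Adapted F ξ) (hZadapted : Adapted F Z)
    (hZL2 : ∀ t, MemLp (Z t) 2 μ)
    (hmds : ∀ t, μ[Z (t + 1)|F t] =ᵐ[μ] 0)
    (hX0 : ∀ ω, X 0 ω = x₀)
    (hrec : ∀ t ω, X (t + 1) ω = (1 + α) * X t ω + ξ (t + 1) ω + Z (t + 1) ω)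
    (T : ℕ) (δ : ℝ) (hδ : δ ∈ Set.Ioo (0 : ℝ) 1)
    (δξ : ℝ) (hδξ : δξ ∈ Set.Ioo (0 : ℝ) 1)
    (Ξ σ : ℝ)
    (hξbound : ∀ t, ∀ᵐ ω ∂μ,
      (∀ s ≤ t, X s ω ≤ 2 * ((1 + α) ^ s * x₀p)) →
      (μ[Set.indicator {ω' | (1 + α) ^ t * Ξ < |ξ (t + 1) ω'|} (fun _ => (1 : ℝ))|F t]) ω
        ≤ δξ)
    (hvar : ∀ t, ∀ᵐ ω ∂μ,
      (∀ s ≤ t, X s ω ≤ 2 * ((1 + α) ^ s * x₀p)) →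
      (μ[fun ω' => (Z (t + 1) ω') ^ 2|F t]) ω ≤ (1 + α) ^ t * σ ^ 2)
    (hΞle : Ξ ≤ x₀p / (4 * T)) (hσle : σ ^ 2 ≤ δ * α * x₀p ^ 2 / 16) :
    ENNReal.ofReal (1 - δ - T * δξ)
      ≤ μ {ω | ∀ t, 1 ≤ t → t ≤ T → X t ω ≤ 2 * ((1 + α) ^ t * x₀p)} := by
  have hx₀p0 : 0 < x₀p := hx₀.trans_le hx₀p
  set A := goodUntil (goodStep α x₀p Ξ X ξ)
  have hA : ∀ s, MeasurableSet[F s] (A s) :=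
    measurableSet_goodUntil (measurableSet_goodStep hXadapted hξadapted)
  have hAX : ∀ s, ∀ ω ∈ A s, ∀ r ≤ s, X r ω ≤ 2 * ((1 + α) ^ r * x₀p) := fun s ω =>
    le_of_mem_goodUntil_goodStep (by rw [hX0]; linarith)
  have hbadξ (t : ℕ) : μ.real (A t ∩ {ω | (1 + α) ^ t * Ξ < |ξ (t + 1) ω|}) ≤ δξ :=
    measureReal_inter_le_of_condExp_indicator_le (F.le t) (hA t)
      (F.le _ _ (measurable_abs.comp (hξadapted (t + 1)) measurableSet_Ioi)) hδξ.1.le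
      (by filter_upwards [hξbound t] with ω h hω using h (hAX t ω hω))
  have hbadZ := (measureReal_ge_sum_stoppedIncrement_le hα hA hZadapted hZL2 hmds
    (fun s => by filter_upwards [hvar s] with ω h hω using h (hAX s ω hω)) T (half_pos hx₀p0)).trans
    (show σ ^ 2 / (α * (x₀p / 2) ^ 2) ≤ δ / 4 by rw [div_le_iff₀ (by positivity)]; nlinarith)
  have hcover := compl_setOf_le_two_mul_subset hα hx₀p0.le (fun ω => (hX0 ω).trans_le hx₀p) hrec
    (natCast_mul_le_of_le_div (by positivity) (hΞle.trans_eq (div_mul_eq_div_div _ _ _)))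
  refine ENNReal.ofReal_le_of_le_toReal ?_
  have := one_sub_le_measureReal_of_compl_subset hcover hbadξ hbadZ
  rw [measureReal_def] at this
  linarith [hδ.1]

/-- stochastic Gronwall lemma, upper bound variant.
Let `X_{t+1} = (1+α) X_t + ξ_{t+1} + Z_{t+1}` with `X₀ = x₀ > 0`, `(ξ_t)` adapted,
`(Z_t)` a martingale difference sequence; let `x₀⁺ ≥ x₀` and `x_t⁺ = (1+α)^t x₀⁺`.
Assume that on the event `{X_s ≤ 2 x_s⁺ for all s ≤ t}` the conditional probability that
`|ξ_{t+1}| > (1+α)^t Ξ` is at most `δ_ξ` and the conditional variance of `Z_{t+1}` is at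
most `(1+α)^t σ²`. If `Ξ ≤ x₀⁺/(4T)` and `σ² ≤ δ α (x₀⁺)²/16`, then with probability at
least `1 − δ − T δ_ξ`, `X_t ≤ 2 x_t⁺` for all `t ∈ [T]`. -/
theorem stochastic_gronwall_upper {Ω : Type*} {m0 : MeasurableSpace Ω}
    (μ : Measure Ω) [IsProbabilityMeasure μ] (F : Filtration ℕ m0)
    (α x₀ x₀p : ℝ) (hα : 0 < α) (hx₀ : 0 < x₀) (hx₀p : x₀ ≤ x₀p)
    (X ξ Z : ℕ → Ω → ℝ)
    (hXadapted : Adapted F X) (hξadapted : Adapted F ξ) (hZadapted : Adapted F Z)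
    (hZL2 : ∀ t, MemLp (Z t) 2 μ)
    (hmds : ∀ t, μ[Z (t + 1)|F t] =ᵐ[μ] 0)
    (hX0 : ∀ ω, X 0 ω = x₀)
    (hrec : ∀ t ω, X (t + 1) ω = (1 + α) * X t ω + ξ (t + 1) ω + Z (t + 1) ω)
    (T : ℕ) (δ : ℝ) (hδ : δ ∈ Set.Ioo (0 : ℝ) 1)
    (δξ : ℝ) (hδξ : δξ ∈ Set.Ioo (0 : ℝ) 1)
    (Ξ σ : ℝ) (hΞ : 0 < Ξ) (hσ : 0 < σ)
    (hξbound : ∀ t, ∀ᵐ ω ∂μ,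
      (∀ s ≤ t, X s ω ≤ 2 * ((1 + α) ^ s * x₀p)) →
      (μ[Set.indicator {ω' | (1 + α) ^ t * Ξ < |ξ (t + 1) ω'|} (fun _ => (1 : ℝ))|F t]) ω
        ≤ δξ)
    (hvar : ∀ t, ∀ᵐ ω ∂μ,
      (∀ s ≤ t, X s ω ≤ 2 * ((1 + α) ^ s * x₀p)) →
      (μ[fun ω' => (Z (t + 1) ω') ^ 2|F t]) ω ≤ (1 + α) ^ t * σ ^ 2)
    (hΞle : Ξ ≤ x₀p / (4 * T)) (hσle : σ ^ 2 ≤ δ * α * x₀p ^ 2 / 16) :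
    ENNReal.ofReal (1 - δ - T * δξ)
      ≤ μ {ω | ∀ t, 1 ≤ t → t ≤ T → X t ω ≤ 2 * ((1 + α) ^ t * x₀p)} :=
  stochastic_gronwall_upper_general μ F α x₀ x₀p hα hx₀ hx₀p X ξ Z hXadapted hξadapted hZadapted
    hZL2 hmds hX0 hrec T δ hδ δξ hδξ Ξ σ hξbound hvar hΞle hσle
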